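/- arXiv:math/0108055 — 5 statements merged into one kernel-verified Lean document; each statement's English description precedes it below -/
import Mathlib

section
/- If φ : E(H) → E(H) is a bijection of the set of effects on a Hilbert space H such that for all effects E, F, E + F ≤ I if and only if φ(E) + φ(F) ≤ I (i.e., φ preserves orthogonality in both directions), then φ preserves the order in both directions: E ≤ F iff φ(E) ≤ φ(F). -/
variable {H : Type*} [NormedAddCommGroup H] [InnerProductSpace ℂ H] [CompleteSpace H]

/-- An effect on a Hilbert space: a positive operator bounded above by the identity. -/
def IsEffect (A : H →L[ℂ] H) : Prop := A.IsPositive ∧ (1 - A).IsPositive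

lemma order_iff_orth {E F : H →L[ℂ] H} (hE : IsEffect E) (hF : IsEffect F) :
    (F - E).IsPositive ↔
      ∀ G : {E : H →L[ℂ] H // IsEffect E},
        (1 - (F + (G : H →L[ℂ] H))).IsPositive → (1 - (E + (G : H →L[ℂ] H))).IsPositive := by
  constructor
  · intro h G hG
    have := hG.add h
    have heq : 1 - (F + (G : H →L[ℂ] H)) + (F - E) = 1 - (E + (G : H →L[ℂ] H)) := by abel
    rwa [heq] at this
  · intro h
    have hGe : IsEffect (1 - F) := ⟨hF.2, by simpa using hF.1⟩
    have h0 : (1 - (F + (1 - F))).IsPositive := by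
      have : (1 - (F + (1 - F))) = 0 := by abel
      rw [this]; exact ContinuousLinearMap.isPositive_zero
    have := h ⟨1 - F, hGe⟩ h0
    have heq : 1 - (E + (1 - F)) = F - E := by abel
    rwa [heq] at this

/-- A bijection of the set of effects preserving orthogonality in both
directions preserves the order in both directions. -/
theorem orthogonality_preserving_implies_order_preserving
    (φ : {E : H →L[ℂ] H // IsEffect E} → {E : H →L[ℂ] H // IsEffect E})
    (hbij : Function.Bijective φ)
    (horth : ∀ E F : {E : H →L[ℂ] H // IsEffect E},
      (1 - ((E : H →L[ℂ] H) + F)).IsPositive ↔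
        (1 - ((φ E : H →L[ℂ] H) + φ F)).IsPositive) :
    ∀ E F : {E : H →L[ℂ] H // IsEffect E},
      ((F : H →L[ℂ] H) - E).IsPositive ↔ ((φ F : H →L[ℂ] H) - φ E).IsPositive := by
  intro E F
  rw [order_iff_orth E.2 F.2, order_iff_orth (φ E).2 (φ F).2]
  constructor
  · intro h G' hG'
    obtain ⟨G, rfl⟩ := hbij.surjective G'
    rw [add_comm] at hG' ⊢
    rw [← horth] at hG'
    rw [← horth]
    rw [add_comm] at hG' ⊢
    exact h G hG'
  · intro h G hG
    have := h (φ G) (by rw [add_comm] at hG ⊢; rw [← horth] at *; rw [add_comm] at hG ⊢; exact hG)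
    rw [add_comm, ← horth, add_comm] at this
    exact this
end

section
/- Let E, F be rank-one effects on a Hilbert space H whose ranges are different one-dimensional subspaces. Then E and F are coexistent if and only if E + F ≤ I. -/
variable {H : Type*} [NormedAddCommGroup H] [InnerProductSpace ℂ H] [CompleteSpace H]

/-- Coexistence of two effects. -/
def Coexistent (E F : H →L[ℂ] H) : Prop :=
  ∃ A B C : H →L[ℂ] H, IsEffect A ∧ IsEffect B ∧ IsEffect C ∧
    E = A + C ∧ F = B + C ∧ (1 - (A + B + C)).IsPositive

/-!
If `E = A + C` and `F = B + C` with `A, B, C ≥ 0`, then `0 ≤ C ≤ E`. Writing `C = S* S` shows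
that `⟪C x, x⟫ = 0` forces `C x = 0`, so `ker E ⊆ ker C` and hence
`ran C ⊆ (ker C)ᗮ ⊆ (ker E)ᗮ = ran E`, the last range being finite-dimensional and thus closed.
Likewise `ran C ⊆ ran F`; two distinct lines meet only in `0`, so `C = 0` and `A + B + C = E + F`.
Conversely, if `E + F ≤ 1` then `E = E + 0`, `F = F + 0` is a joint decomposition.
-/

open ContinuousLinearMap
open scoped InnerProductSpace ComplexOrder

theorem Submodule.inf_eq_bot_of_finrank_eq_one {K V : Type*} [DivisionRing K] [AddCommGroup V]
    [Module K V] {p q : Submodule K V} (hp : Module.finrank K p = 1)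
    (hq : Module.finrank K q = 1) (hpq : p ≠ q) : p ⊓ q = ⊥ := by
  have : FiniteDimensional K p := Module.finite_of_finrank_eq_succ hp
  have : FiniteDimensional K q := Module.finite_of_finrank_eq_succ hq
  by_contra h
  have hpos : 1 ≤ Module.finrank K ↥(p ⊓ q) :=
    Nat.one_le_iff_ne_zero.mpr (mt Submodule.finrank_eq_zero.mp h)
  exact hpq <| (Submodule.eq_of_le_of_finrank_le inf_le_left (hp ▸ hpos)).symm.trans
    (Submodule.eq_of_le_of_finrank_le inf_le_right (hq ▸ hpos))

namespace ContinuousLinearMap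

theorem IsPositive.apply_eq_zero_of_inner_self_eq_zero {C : H →L[ℂ] H} (hC : C.IsPositive)
    {x : H} (hx : ⟪C x, x⟫_ℂ = 0) : C x = 0 := by
  obtain ⟨S, rfl⟩ := CStarAlgebra.nonneg_iff_eq_star_mul_self.mp ((nonneg_iff_isPositive C).mpr hC)
  have hSx : S x = 0 := by
    rw [star_eq_adjoint, mul_def, comp_apply, adjoint_inner_left] at hx
    simpa using hx
  simp [mul_def, hSx]

theorem ker_le_ker_of_isPositive_sub {C E : H →L[ℂ] H} (hC : C.IsPositive)
    (hEC : (E - C).IsPositive) : E.ker ≤ C.ker := by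
  intro x hx
  rw [LinearMap.mem_ker, coe_coe] at hx ⊢
  refine hC.apply_eq_zero_of_inner_self_eq_zero (le_antisymm ?_ (hC.inner_nonneg_left x))
  simpa [hx, inner_sub_left] using hEC.inner_nonneg_left x

theorem range_le_range_of_isPositive_sub {C E : H →L[ℂ] H} (hC : C.IsPositive)
    (hE : IsSelfAdjoint E) (hEC : (E - C).IsPositive) [FiniteDimensional ℂ E.range] :
    C.range ≤ E.range := by
  have hCE := Submodule.orthogonal_le (ker_le_ker_of_isPositive_sub hC hEC)
  rw [orthogonal_ker, orthogonal_ker, hC.isSelfAdjoint.adjoint_eq, hE.adjoint_eq,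
    (Submodule.closed_of_finiteDimensional E.range).submodule_topologicalClosure_eq] at hCE
  exact (Submodule.le_topologicalClosure _).trans hCE

theorem eq_zero_of_isPositive_sub_of_range_inf_range_eq_bot {C E F : H →L[ℂ] H}
    (hC : C.IsPositive) (hE : IsSelfAdjoint E) (hF : IsSelfAdjoint F)
    (hEC : (E - C).IsPositive) (hFC : (F - C).IsPositive)
    [FiniteDimensional ℂ E.range] [FiniteDimensional ℂ F.range]
    (hEF : E.range ⊓ F.range = ⊥) : C = 0 := by
  ext x
  have hx : C x ∈ E.range ⊓ F.range :=
    ⟨range_le_range_of_isPositive_sub hC hE hEC ⟨x, rfl⟩,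
      range_le_range_of_isPositive_sub hC hF hFC ⟨x, rfl⟩⟩
  simpa [hEF] using hx

end ContinuousLinearMap

theorem Coexistent.isPositive_one_sub_add {E F : H →L[ℂ] H} (h : Coexistent E F)
    (hE : IsSelfAdjoint E) (hF : IsSelfAdjoint F)
    [FiniteDimensional ℂ E.range] [FiniteDimensional ℂ F.range]
    (hEF : E.range ⊓ F.range = ⊥) : (1 - (E + F)).IsPositive := by
  obtain ⟨A, B, C, hA, hB, hC, rfl, rfl, hABC⟩ := h
  obtain rfl : C = 0 := eq_zero_of_isPositive_sub_of_range_inf_range_eq_bot hC.1 hE hF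
    (by simpa using hA.1) (by simpa using hB.1) hEF
  simpa [add_assoc] using hABC

/-- Rank-one effects with different ranges are coexistent iff `E + F ≤ I`. -/
theorem rankOne_coexistent_iff (E F : H →L[ℂ] H) (hE : IsEffect E) (hF : IsEffect F)
    (hrE : Module.finrank ℂ (LinearMap.range (E : H →ₗ[ℂ] H)) = 1)
    (hrF : Module.finrank ℂ (LinearMap.range (F : H →ₗ[ℂ] H)) = 1)
    (hne : LinearMap.range (E : H →ₗ[ℂ] H) ≠ LinearMap.range (F : H →ₗ[ℂ] H)) :
    Coexistent E F ↔ (1 - (E + F)).IsPositive := by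
  have : FiniteDimensional ℂ E.range := Module.finite_of_finrank_eq_succ hrE
  have : FiniteDimensional ℂ F.range := Module.finite_of_finrank_eq_succ hrF
  refine ⟨fun h ↦ h.isPositive_one_sub_add hE.1.isSelfAdjoint hF.1.isSelfAdjoint
      (Submodule.inf_eq_bot_of_finrank_eq_one hrE hrF hne), fun h ↦ ?_⟩
  have hzero : IsEffect (0 : H →L[ℂ] H) := ⟨isPositive_zero, by simp [isPositive_one]⟩
  exact ⟨E, F, 0, hE, hF, hzero, (add_zero E).symm, (add_zero F).symm, by simpa using h⟩
end

section
/- Let E be an effect on a Hilbert space H and let λ, μ be scalars with 0 < λ < μ ≤ 1 such that λI ≤ E ≤ μI. If φ is a unit vector in H whose strength λ(E, P_φ) = sup{ t ∈ [0,1] : t P_φ ≤ E } equals λ, then φ is an eigenvector of E with eigenvalue λ; similarly, if ψ is a unit vector with λ(E, P_ψ) = μ, then Eψ = μψ. -/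
variable {H : Type*} [NormedAddCommGroup H] [InnerProductSpace ℂ H] [CompleteSpace H]

/-- The rank-one projection onto the span of a unit vector `φ`. -/
noncomputable def projLine (φ : H) : H →L[ℂ] H := (innerSL ℂ φ).smulRight φ

/-- The strength of an effect `E` along the ray determined by a unit vector `φ`:
`λ(E, P_φ) = sup { t ∈ [0,1] : t • P_φ ≤ E }`. -/
noncomputable def strength (E : H →L[ℂ] H) (φ : H) : ℝ :=
  sSup {t : ℝ | t ∈ Set.Icc (0:ℝ) 1 ∧ (E - (t : ℂ) • projLine φ).IsPositive}

/-!
Since `E ≥ λ > 0`, `E` is invertible; let `E u = φ` and `w = re ⟪φ, u⟫`. Cauchy–Schwarz for the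
semi-inner product `⟪E ·, ·⟫` gives `|⟪φ, x⟫|² ≤ w ⟪E x, x⟫`, i.e. `w⁻¹ P_φ ≤ E`, so
`w⁻¹ ≤ λ(E, P_φ) = λ`. On the other hand `λ ‖u‖² ≤ ⟪E u, u⟫ = w ≤ ‖u‖`, and together these force
`⟪(E - λ) u, u⟫ = 0`. A positive operator kills every vector at which its form vanishes, so
`E u = λ u`, and `φ = λ u` is an eigenvector as well. For `μ`, testing `t P_ψ ≤ E` at `ψ` gives
`μ ≤ ⟪E ψ, ψ⟫ ≤ μ`, so `μ - E` kills `ψ`.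
-/

open scoped InnerProductSpace
open ContinuousLinearMap

section Form

variable {V : Type*} [NormedAddCommGroup V] [InnerProductSpace ℂ V]

theorem ContinuousLinearMap.re_inner_sub_smul_one_apply (T : V →L[ℂ] V) (c : ℝ) (x : V) :
    (⟪(T - (c : ℂ) • 1) x, x⟫_ℂ).re = (⟪T x, x⟫_ℂ).re - c * ‖x‖ ^ 2 := by
  rw [sub_apply, smul_apply, one_apply_eq_self, inner_sub_left, inner_smul_left,
    Complex.conj_ofReal, Complex.sub_re, Complex.re_ofReal_mul]
  simp only [← RCLike.re_to_complex, inner_self_eq_norm_sq]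

theorem ContinuousLinearMap.re_inner_smul_one_sub_apply (T : V →L[ℂ] V) (c : ℝ) (x : V) :
    (⟪((c : ℂ) • 1 - T) x, x⟫_ℂ).re = c * ‖x‖ ^ 2 - (⟪T x, x⟫_ℂ).re := by
  rw [sub_apply, smul_apply, one_apply_eq_self, inner_sub_left, inner_smul_left,
    Complex.conj_ofReal, Complex.sub_re, Complex.re_ofReal_mul]
  simp only [← RCLike.re_to_complex, inner_self_eq_norm_sq]

theorem IsEffect.re_inner_apply_self_le {E : V →L[ℂ] V} (hE : IsEffect E) (x : V) :
    (⟪E x, x⟫_ℂ).re ≤ ‖x‖ ^ 2 := by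
  have h := hE.2.re_inner_nonneg_left x
  rw [RCLike.re_to_complex, ← one_smul ℂ (1 : V →L[ℂ] V), ← Complex.ofReal_one,
    re_inner_smul_one_sub_apply, one_mul] at h
  linarith

theorem isPositive_projLine (φ : V) : (projLine φ).IsPositive :=
  InnerProductSpace.isPositive_rankOne_self φ

theorem re_inner_projLine_apply (φ x : V) : (⟪projLine φ x, x⟫_ℂ).re = ‖⟪φ, x⟫_ℂ‖ ^ 2 := by
  rw [projLine, smulRight_apply, innerSL_apply_apply, inner_smul_left, RCLike.conj_mul]
  norm_cast

theorem re_inner_sub_smul_projLine_apply (E : V →L[ℂ] V) (t : ℝ) (φ x : V) :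
    (⟪(E - (t : ℂ) • projLine φ) x, x⟫_ℂ).re = (⟪E x, x⟫_ℂ).re - t * ‖⟪φ, x⟫_ℂ‖ ^ 2 := by
  rw [sub_apply, smul_apply, inner_sub_left, inner_smul_left, Complex.conj_ofReal, Complex.sub_re,
    Complex.re_ofReal_mul, re_inner_projLine_apply]

end Form

section Strength

variable {V : Type*} [NormedAddCommGroup V] [InnerProductSpace ℂ V] {E : V →L[ℂ] V} {φ : V}
  {t : ℝ}

theorem le_re_inner_of_isPositive_sub_smul_projLine (hφ : ‖φ‖ = 1)
    (h : (E - (t : ℂ) • projLine φ).IsPositive) : t ≤ (⟪E φ, φ⟫_ℂ).re := by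
  have h' := h.re_inner_nonneg_left φ
  rw [RCLike.re_to_complex, re_inner_sub_smul_projLine_apply, inner_self_eq_norm_sq_to_K, hφ]
    at h'
  simpa using h'

theorem le_strength (ht : t ∈ Set.Icc 0 1) (h : (E - (t : ℂ) • projLine φ).IsPositive) :
    t ≤ strength E φ :=
  le_csSup ⟨1, fun _ hs => hs.1.2⟩ ⟨ht, h⟩

theorem strength_le_re_inner (hE : E.IsPositive) (hφ : ‖φ‖ = 1) :
    strength E φ ≤ (⟪E φ, φ⟫_ℂ).re :=
  csSup_le ⟨0, ⟨le_rfl, zero_le_one⟩, by simpa using hE⟩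
    fun _ hs => le_re_inner_of_isPositive_sub_smul_projLine hφ hs.2

end Strength

namespace ContinuousLinearMap

theorem IsPositive.exists_inner_apply_eq {T : H →L[ℂ] H} (hT : T.IsPositive) :
    ∃ S : H →L[ℂ] H, ∀ x y, ⟪T x, y⟫_ℂ = ⟪S x, S y⟫_ℂ := by
  obtain ⟨S, rfl⟩ :=
    CStarAlgebra.nonneg_iff_eq_star_mul_self.mp ((nonneg_iff_isPositive T).mpr hT)
  exact ⟨S, fun x y => adjoint_inner_left S y (S x)⟩

theorem IsPositive.norm_inner_sq_le {T : H →L[ℂ] H} (hT : T.IsPositive) (x y : H) :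
    ‖⟪T x, y⟫_ℂ‖ ^ 2 ≤ (⟪T x, x⟫_ℂ).re * (⟪T y, y⟫_ℂ).re := by
  obtain ⟨S, hS⟩ := hT.exists_inner_apply_eq
  simp only [hS, ← RCLike.re_to_complex, inner_self_eq_norm_sq, ← mul_pow]
  gcongr
  exact norm_inner_le_norm _ _

theorem IsPositive.apply_eq_zero_of_re_inner_eq_zero {T : H →L[ℂ] H} (hT : T.IsPositive) {x : H}
    (hx : (⟪T x, x⟫_ℂ).re = 0) : T x = 0 := by
  have h := hT.norm_inner_sq_le x (T x)
  rw [hx, zero_mul] at h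
  simpa using h

theorem apply_eq_smul_of_isPositive_sub_smul_one {T : H →L[ℂ] H} {c : ℝ}
    (h : (T - (c : ℂ) • 1).IsPositive) {x : H} (hx : (⟪T x, x⟫_ℂ).re = c * ‖x‖ ^ 2) :
    T x = (c : ℂ) • x := by
  have h0 := h.apply_eq_zero_of_re_inner_eq_zero (by rw [re_inner_sub_smul_one_apply, hx, sub_self])
  rwa [sub_apply, smul_apply, one_apply_eq_self, sub_eq_zero] at h0

theorem apply_eq_smul_of_isPositive_smul_one_sub {T : H →L[ℂ] H} {c : ℝ}
    (h : ((c : ℂ) • 1 - T).IsPositive) {x : H} (hx : (⟪T x, x⟫_ℂ).re = c * ‖x‖ ^ 2) :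
    T x = (c : ℂ) • x := by
  have h0 := h.apply_eq_zero_of_re_inner_eq_zero (by rw [re_inner_smul_one_sub_apply, hx, sub_self])
  rw [sub_apply, smul_apply, one_apply_eq_self, sub_eq_zero] at h0
  exact h0.symm

theorem isUnit_of_isPositive_sub_smul_one {T : H →L[ℂ] H} {c : ℝ} (hc : 0 < c)
    (h : (T - (c : ℂ) • 1).IsPositive) : IsUnit T := by
  refine CStarAlgebra.isUnit_of_le (algebraMap ℝ _ c) ?_ (isStrictlyPositive_algebraMap hc)
  rwa [le_def, Algebra.algebraMap_eq_smul_one, ← Complex.coe_smul]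

end ContinuousLinearMap

-- If `re ⟪φ, u⟫ = 0`, the coefficient is the junk value `0⁻¹ = 0` and this just says `E ≥ 0`.
theorem isPositive_sub_smul_projLine_of_apply_eq {E : H →L[ℂ] H} (hE : E.IsPositive) {u φ : H}
    (hu : E u = φ) : (E - ((((⟪φ, u⟫_ℂ).re)⁻¹ : ℝ) : ℂ) • projLine φ).IsPositive := by
  subst hu
  set w := (⟪E u, u⟫_ℂ).re
  have hw : 0 ≤ w := hE.re_inner_nonneg_left u
  refine ⟨hE.isSymmetric.sub ((isPositive_projLine _).smul_of_nonneg ?_).isSymmetric, fun x => ?_⟩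
  · exact_mod_cast inv_nonneg.mpr hw
  rw [reApplyInnerSelf_apply, RCLike.re_to_complex, re_inner_sub_smul_projLine_apply, sub_nonneg]
  have hEx : 0 ≤ (⟪E x, x⟫_ℂ).re := hE.re_inner_nonneg_left x
  calc w⁻¹ * ‖⟪E u, x⟫_ℂ‖ ^ 2 ≤ w⁻¹ * (w * (⟪E x, x⟫_ℂ).re) := by
        gcongr
        exact hE.norm_inner_sq_le u x
    _ = (w⁻¹ * w) * (⟪E x, x⟫_ℂ).re := by ring
    _ ≤ (⟪E x, x⟫_ℂ).re := mul_le_of_le_one_left hEx (inv_mul_le_one_of_le₀ le_rfl hw)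

theorem IsEffect.inv_re_inner_le_strength {E : H →L[ℂ] H} (hE : IsEffect E) {u φ : H}
    (hφ : ‖φ‖ = 1) (hu : E u = φ) : ((⟪φ, u⟫_ℂ).re)⁻¹ ≤ strength E φ := by
  have hpos := isPositive_sub_smul_projLine_of_apply_eq hE.1 hu
  refine le_strength ⟨inv_nonneg.mpr ?_, ?_⟩ hpos
  · simpa [← hu] using hE.1.re_inner_nonneg_left u
  · simpa [hφ] using (le_re_inner_of_isPositive_sub_smul_projLine hφ hpos).trans
      (hE.re_inner_apply_self_le φ)

theorem IsEffect.apply_eq_smul_of_smul_one_le_of_strength_eq {E : H →L[ℂ] H} (hE : IsEffect E)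
    {c : ℝ} (hc : 0 < c) (hcE : (E - (c : ℂ) • 1).IsPositive) {φ : H} (hφ : ‖φ‖ = 1)
    (hs : strength E φ = c) : E φ = (c : ℂ) • φ := by
  obtain ⟨u, rfl⟩ : ∃ u, E u = φ :=
    (isUnit_iff_bijective.mp (isUnit_of_isPositive_sub_smul_one hc hcE)).2 φ
  set w := (⟪E u, u⟫_ℂ).re
  have h_strength : w⁻¹ ≤ c := hs ▸ hE.inv_re_inner_le_strength hφ rfl
  have h_lower : c * ‖u‖ ^ 2 ≤ w := by
    have h := hcE.re_inner_nonneg_left u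
    rw [RCLike.re_to_complex, re_inner_sub_smul_one_apply] at h
    linarith
  have h_upper : w ≤ ‖u‖ := calc
    w ≤ ‖⟪E u, u⟫_ℂ‖ := Complex.re_le_norm _
    _ ≤ ‖E u‖ * ‖u‖ := norm_inner_le_norm _ _
    _ = ‖u‖ := by rw [hφ, one_mul]
  have hu : u ≠ 0 := by
    rintro rfl
    simp at hφ
  have hw : 0 < w := lt_of_lt_of_le (by positivity) h_lower
  have h_one : 1 ≤ c * w := by
    rwa [inv_le_iff_one_le_mul₀ hw] at h_strength
  have h_form : w = c * ‖u‖ ^ 2 := le_antisymm (calc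
    w ≤ (c * w) * w := le_mul_of_one_le_left hw.le h_one
    _ = c * (w * w) := mul_assoc _ _ _
    _ ≤ c * ‖u‖ ^ 2 := by
      rw [sq]
      exact mul_le_mul_of_nonneg_left (mul_self_le_mul_self hw.le h_upper) hc.le) h_lower
  have hEu := apply_eq_smul_of_isPositive_sub_smul_one hcE h_form
  simpa [map_smul] using congrArg E hEu

theorem ContinuousLinearMap.IsPositive.apply_eq_smul_of_le_smul_one_of_strength_eq
    {E : H →L[ℂ] H} (hE : E.IsPositive) {c : ℝ} (hEc : ((c : ℂ) • 1 - E).IsPositive) {φ : H}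
    (hφ : ‖φ‖ = 1) (hs : strength E φ = c) : E φ = (c : ℂ) • φ := by
  refine apply_eq_smul_of_isPositive_smul_one_sub hEc (le_antisymm ?_ ?_)
  · have h := hEc.re_inner_nonneg_left φ
    rw [RCLike.re_to_complex, re_inner_smul_one_sub_apply] at h
    linarith
  · simpa [hφ, hs] using strength_le_re_inner hE hφ

theorem strength_extremal_eigenvector_general (E : H →L[ℂ] H) (hE : IsEffect E)
    (l m : ℝ) (hl : 0 < l)
    (hlE : (E - (l : ℂ) • (1 : H →L[ℂ] H)).IsPositive)
    (hEm : ((m : ℂ) • (1 : H →L[ℂ] H) - E).IsPositive)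
    (φ ψ : H) (hφ : ‖φ‖ = 1) (hψ : ‖ψ‖ = 1)
    (hsφ : strength E φ = l) (hsψ : strength E ψ = m) :
    E φ = (l : ℂ) • φ ∧ E ψ = (m : ℂ) • ψ :=
  ⟨hE.apply_eq_smul_of_smul_one_le_of_strength_eq hl hlE hφ hsφ,
    hE.1.apply_eq_smul_of_le_smul_one_of_strength_eq hEm hψ hsψ⟩

/-- If `λ I ≤ E ≤ μ I` with `0 < λ < μ ≤ 1`, a unit vector along which the
strength of `E` is `λ` (resp. `μ`) is an eigenvector of `E` with eigenvalue `λ` (resp. `μ`). -/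
theorem strength_extremal_eigenvector (E : H →L[ℂ] H) (hE : IsEffect E)
    (l m : ℝ) (hl : 0 < l) (hlm : l < m) (hm : m ≤ 1)
    (hlE : (E - (l : ℂ) • (1 : H →L[ℂ] H)).IsPositive)
    (hEm : ((m : ℂ) • (1 : H →L[ℂ] H) - E).IsPositive)
    (φ ψ : H) (hφ : ‖φ‖ = 1) (hψ : ‖ψ‖ = 1)
    (hsφ : strength E φ = l) (hsψ : strength E ψ = m) :
    E φ = (l : ℂ) • φ ∧ E ψ = (m : ℂ) • ψ :=
  strength_extremal_eigenvector_general E hE l m hl hlE hEm φ ψ hφ hψ hsφ hsψ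
end

section
/- If H is a Hilbert space with dim H ≥ 2, then the real linear span of the set of orthogonal projections on H is dense in B_s(H) with respect to the operator norm. -/
/-!
For self-adjoint `a` let `P t` be the orthogonal projection onto `ker (a - t)⁺`, a substitute for
the spectral projection `1_{(-∞, t]}(a)` that only needs the continuous functional calculus.
Since `(a - t)⁺ (a - t)⁻ = 0`, the projection `P t` kills `(a - t)⁺` and fixes `(a - t)⁻`; hence it
commutes with `a`, and `a ≤ t` on its range while `a ≥ t` on its complement. For a partition
`τ₀ < -‖a‖ < … < ‖a‖ < τₙ` of mesh `δ`, the step function `∑ τᵢ₊₁ (P τᵢ₊₁ - P τᵢ)` therefore lies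
between `a` and `a + δ`, so it is `δ`-close to `a` in norm.
-/

open CFC

theorem eq_zero_of_smul_le_smul_of_nonneg {M : Type*} [AddCommGroup M] [PartialOrder M]
    [IsOrderedAddMonoid M] [Module ℝ M] [PosSMulMono ℝ M] [PosSMulReflectLE ℝ M] {q : M}
    {c d : ℝ} (hdc : d < c) (h : c • q ≤ d • q) (hq : 0 ≤ q) : q = 0 := by
  have h' : (c - d) • q ≤ (c - d) • 0 := by rwa [sub_smul, smul_zero, sub_nonpos]
  exact le_antisymm ((smul_le_smul_iff_of_pos_left (sub_pos.2 hdc)).1 h') hq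

theorem IsIdempotentElem.conj_algebraMap {R : Type*} [Ring R] [Algebra ℝ R] {p : R}
    (hp : IsIdempotentElem p) (t : ℝ) : p * algebraMap ℝ R t * p = t • p := by
  rw [Algebra.algebraMap_eq_smul_one, mul_smul_comm, mul_one, smul_mul_assoc, hp.eq]

theorem IsStarProjection.conj_conj_of_mul_eq_self {R : Type*} [Semiring R] [StarRing R]
    {p q : R} (hp : IsStarProjection p) (hq : IsSelfAdjoint q) (hpq : p * q = p) (x : R) :
    p * (q * x * q) * p = p * x * p := by
  have hqp : q * p = p := by
    simpa [hp.isSelfAdjoint.star_eq, hq.star_eq] using congr(star $hpq)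
  rw [← mul_assoc, ← mul_assoc, hpq, mul_assoc, hqp]

section CStarAlgebra

variable {A : Type*} [CStarAlgebra A] [PartialOrder A] [StarOrderedRing A]

theorem mul_eq_zero_of_nonneg_of_le_of_mul_eq_zero {a b c : A} (ha : 0 ≤ a) (hab : a ≤ b)
    (hbc : b * c = 0) : a * c = 0 := by
  have hconj : star c * a * c = 0 :=
    le_antisymm (by simpa [mul_assoc, hbc] using star_left_conjugate_le_conjugate hab c)
      (star_left_conjugate_nonneg ha c)
  have hsqrt : sqrt a * c = 0 := by
    rw [← CStarRing.star_mul_self_eq_zero_iff, star_mul, (sqrt_nonneg a).isSelfAdjoint.star_eq,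
      ← mul_assoc, mul_assoc (star c), sqrt_mul_sqrt_self a, hconj]
  rw [← sqrt_mul_sqrt_self a, mul_assoc, hsqrt, mul_zero]

theorem antitone_posPart_sub_algebraMap {a : A} (ha : IsSelfAdjoint a) :
    Antitone fun t : ℝ => (a - algebraMap ℝ A t)⁺ := by
  have hcfc (t : ℝ) : (a - algebraMap ℝ A t)⁺ = cfc (fun x : ℝ => (x - t)⁺) a := by
    have hshift : a - algebraMap ℝ A t = cfc (fun x : ℝ => x - t) a := by
      rw [cfc_sub .., cfc_id' .., cfc_const ..]
    rw [CFC.posPart_def, cfcₙ_eq_cfc, hshift, ← cfc_comp ..]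
    rfl
  intro s t hst
  simp only [hcfc]
  exact cfc_mono fun x _ => posPart_mono (by linarith)

namespace IsStarProjection

variable {a p : A}

theorem mul_eq_neg_negPart (hp : IsStarProjection p) (ha : IsSelfAdjoint a)
    (hpos : a⁺ * p = 0) (hneg : p * a⁻ = a⁻) : p * a = -a⁻ ∧ a * p = -a⁻ := by
  have hpos' : p * a⁺ = 0 := by
    simpa [hp.isSelfAdjoint.star_eq, (posPart_nonneg a).isSelfAdjoint.star_eq]
      using congr(star $hpos)
  have hneg' : a⁻ * p = a⁻ := by
    simpa [hp.isSelfAdjoint.star_eq, (negPart_nonneg a).isSelfAdjoint.star_eq]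
      using congr(star $hneg)
  constructor
  · calc p * a = p * (a⁺ - a⁻) := by rw [posPart_sub_negPart a]
      _ = -a⁻ := by rw [mul_sub, hpos', hneg, zero_sub]
  · calc a * p = (a⁺ - a⁻) * p := by rw [posPart_sub_negPart a]
      _ = -a⁻ := by rw [sub_mul, hpos, hneg', zero_sub]

theorem conj_eq_neg_negPart (hp : IsStarProjection p) (ha : IsSelfAdjoint a)
    (hpos : a⁺ * p = 0) (hneg : p * a⁻ = a⁻) : p * a * p = -a⁻ := by
  rw [mul_assoc, (hp.mul_eq_neg_negPart ha hpos hneg).2, mul_neg, hneg]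

theorem one_sub_conj_eq_posPart (hp : IsStarProjection p) (ha : IsSelfAdjoint a)
    (hpos : a⁺ * p = 0) (hneg : p * a⁻ = a⁻) : (1 - p) * a * (1 - p) = a⁺ := by
  have h := hp.mul_eq_neg_negPart ha hpos hneg
  calc (1 - p) * a * (1 - p) = a - p * a - a * p + p * a * p := by noncomm_ring
    _ = a⁺ := by
      rw [hp.conj_eq_neg_negPart ha hpos hneg, h.1, h.2]
      nth_rw 1 [← posPart_sub_negPart a]
      abel

end IsStarProjection

/-- The properties of the spectral projections `P t = 1_{(-∞, t]}(a)` of a self-adjoint `a` that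
are needed to approximate `a` by step functions. -/
structure IsSpectralFamily (a : A) (P : ℝ → A) : Prop where
  isStarProjection (t : ℝ) : IsStarProjection (P t)
  monotone : Monotone P
  posPart_mul (t : ℝ) : (a - algebraMap ℝ A t)⁺ * P t = 0
  mul_negPart (t : ℝ) : P t * (a - algebraMap ℝ A t)⁻ = (a - algebraMap ℝ A t)⁻

namespace IsSpectralFamily

variable {a : A} {P : ℝ → A}

theorem commute (hP : IsSpectralFamily a P) (ha : IsSelfAdjoint a) (t : ℝ) :
    Commute (P t) a := by
  have h := (hP.isStarProjection t).mul_eq_neg_negPart (ha.sub (.algebraMap A (.all t)))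
    (hP.posPart_mul t) (hP.mul_negPart t)
  simpa using ((commute_iff_eq _ _).2 (h.1.trans h.2.symm)).add_right
    (Algebra.commute_algebraMap_right t (P t))

theorem conj_le (hP : IsSpectralFamily a P) (ha : IsSelfAdjoint a) (t : ℝ) :
    P t * a * P t ≤ t • P t := by
  have h := (hP.isStarProjection t).conj_eq_neg_negPart (ha.sub (.algebraMap A (.all t)))
    (hP.posPart_mul t) (hP.mul_negPart t)
  rw [mul_sub (P t) a, sub_mul, (hP.isStarProjection t).isIdempotentElem.conj_algebraMap,
    sub_eq_iff_eq_add] at h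
  rw [h]
  exact add_le_of_nonpos_left (neg_nonpos.2 (negPart_nonneg _))

theorem le_conj (hP : IsSpectralFamily a P) (ha : IsSelfAdjoint a) (t : ℝ) :
    t • (1 - P t) ≤ (1 - P t) * a * (1 - P t) := by
  have h := (hP.isStarProjection t).one_sub_conj_eq_posPart (ha.sub (.algebraMap A (.all t)))
    (hP.posPart_mul t) (hP.mul_negPart t)
  rw [mul_sub (1 - P t) a, sub_mul,
    (hP.isStarProjection t).isIdempotentElem.one_sub.conj_algebraMap, sub_eq_iff_eq_add] at h
  rw [h]
  exact le_add_of_nonneg_left (posPart_nonneg _)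

theorem eq_zero (hP : IsSpectralFamily a P) (ha : IsSelfAdjoint a) {t : ℝ} (ht : t < -‖a‖) :
    P t = 0 := by
  have hp := hP.isStarProjection t
  have h := star_left_conjugate_le_conjugate ha.neg_algebraMap_norm_le_self (P t)
  rw [hp.isSelfAdjoint.star_eq, ← map_neg, hp.isIdempotentElem.conj_algebraMap] at h
  exact eq_zero_of_smul_le_smul_of_nonneg ht (h.trans (hP.conj_le ha t)) hp.nonneg

theorem eq_one (hP : IsSpectralFamily a P) (ha : IsSelfAdjoint a) {t : ℝ} (ht : ‖a‖ < t) :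
    P t = 1 := by
  have hq := (hP.isStarProjection t).one_sub
  have h := star_left_conjugate_le_conjugate ha.le_algebraMap_norm_self (1 - P t)
  rw [hq.isSelfAdjoint.star_eq, hq.isIdempotentElem.conj_algebraMap] at h
  exact (sub_eq_zero.1 (eq_zero_of_smul_le_smul_of_nonneg ht ((hP.le_conj ha t).trans h)
    hq.nonneg)).symm

theorem mul_sub_mem_Icc (hP : IsSpectralFamily a P) (ha : IsSelfAdjoint a) {s t : ℝ}
    (hst : s ≤ t) : a * (P t - P s) ∈ Set.Icc (s • (P t - P s)) (t • (P t - P s)) := by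
  have hs := hP.isStarProjection s
  have ht := hP.isStarProjection t
  have hle := hP.monotone hst
  have hst₁ : P s * P t = P s := (hs.le_iff_mul_eq_left ht).mp hle
  have hst₂ : P t * P s = P s := (hs.le_iff_mul_eq_right ht).mp hle
  set e := P t - P s
  have he : IsStarProjection e := (hs.le_iff_sub ht).mp hle
  have he_t : e * P t = e := by
    simp only [e, sub_mul, ht.isIdempotentElem.eq, hst₁]
  have he_s : e * (1 - P s) = e := by
    simp only [e, mul_sub, sub_mul, mul_one, hs.isIdempotentElem.eq, hst₂, sub_self, sub_zero]
  have hae : a * e = e * a * e := by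
    rw [mul_assoc, ← ((hP.commute ha t).sub_left (hP.commute ha s)).eq, ← mul_assoc,
      he.isIdempotentElem.eq]
  have hconj (x : A) (c : ℝ) : e * (c • x) * e = c • (e * x * e) := by
    rw [mul_smul_comm, smul_mul_assoc]
  rw [hae]
  constructor
  · calc s • e = e * (s • (1 - P s)) * e := by
          rw [hconj, he_s, he.isIdempotentElem.eq]
      _ ≤ e * ((1 - P s) * a * (1 - P s)) * e := by
          simpa [he.isSelfAdjoint.star_eq] using
            star_left_conjugate_le_conjugate (hP.le_conj ha s) e
      _ = e * a * e := he.conj_conj_of_mul_eq_self hs.one_sub.isSelfAdjoint he_s a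
  · calc e * a * e = e * (P t * a * P t) * e :=
          (he.conj_conj_of_mul_eq_self ht.isSelfAdjoint he_t a).symm
      _ ≤ e * (t • P t) * e := by
          simpa [he.isSelfAdjoint.star_eq] using
            star_left_conjugate_le_conjugate (hP.conj_le ha t) e
      _ = t • e := by rw [hconj, he_t, he.isIdempotentElem.eq]

theorem sum_smul_sub_mem_Icc (hP : IsSpectralFamily a P) (ha : IsSelfAdjoint a) {τ : ℕ → ℝ}
    {δ : ℝ} (hτ : Monotone τ) (hmesh : ∀ i, τ (i + 1) ≤ τ i + δ) (n : ℕ) :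
    ∑ i ∈ Finset.range n, τ (i + 1) • (P (τ (i + 1)) - P (τ i)) ∈
      Set.Icc (a * (P (τ n) - P (τ 0))) (a * (P (τ n) - P (τ 0)) + δ • (P (τ n) - P (τ 0))) := by
  have hIcc i := hP.mul_sub_mem_Icc ha (hτ (Nat.le_succ i))
  have hnonneg i : 0 ≤ P (τ (i + 1)) - P (τ i) :=
    sub_nonneg.2 (hP.monotone (hτ (Nat.le_succ i)))
  rw [← Finset.sum_range_sub (fun i => P (τ i)), Finset.mul_sum, Finset.smul_sum,
    ← Finset.sum_add_distrib]
  refine ⟨Finset.sum_le_sum fun i _ => (hIcc i).2, Finset.sum_le_sum fun i _ => ?_⟩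
  calc τ (i + 1) • (P (τ (i + 1)) - P (τ i))
      ≤ (τ i + δ) • (P (τ (i + 1)) - P (τ i)) := smul_le_smul_of_nonneg_right (hmesh i) (hnonneg i)
    _ ≤ a * (P (τ (i + 1)) - P (τ i)) + δ • (P (τ (i + 1)) - P (τ i)) := by
      rw [add_smul]; exact add_le_add (hIcc i).1 le_rfl

theorem exists_mem_span_norm_sub_le (hP : IsSpectralFamily a P) (ha : IsSelfAdjoint a) {δ : ℝ}
    (hδ : 0 < δ) : ∃ b ∈ Submodule.span ℝ (Set.range P), ‖b - a‖ ≤ δ := by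
  obtain ⟨n, hn⟩ := exists_nat_gt ((2 * ‖a‖ + δ) / δ)
  set τ : ℕ → ℝ := fun i => -‖a‖ - δ + i * δ with hτ_def
  have hτ : Monotone τ := fun i j hij => by
    simp only [hτ_def]; gcongr
  have hτ_succ i : τ (i + 1) ≤ τ i + δ := by simp only [hτ_def]; push_cast; linarith
  have h0 : P (τ 0) = 0 := hP.eq_zero ha (by simp [hτ_def]; linarith)
  have h1 : P (τ n) = 1 := hP.eq_one ha (by
    rw [div_lt_iff₀ hδ] at hn; simp only [hτ_def]; linarith)
  have hb := hP.sum_smul_sub_mem_Icc ha hτ hτ_succ n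
  rw [h0, h1, sub_zero, mul_one, ← Algebra.algebraMap_eq_smul_one] at hb
  refine ⟨_, Submodule.sum_mem (t := Finset.range n) _ fun i _ =>
    Submodule.smul_mem _ (τ (i + 1)) <| Submodule.sub_mem _
      (Submodule.subset_span ⟨τ (i + 1), rfl⟩) (Submodule.subset_span ⟨τ i, rfl⟩), ?_⟩
  rw [CStarAlgebra.norm_le_iff_le_algebraMap _ hδ.le (sub_nonneg.2 hb.1)]
  exact sub_le_iff_le_add'.2 hb.2

theorem mem_closure_span (hP : IsSpectralFamily a P) (ha : IsSelfAdjoint a) :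
    a ∈ closure (Submodule.span ℝ (Set.range P) : Set A) := by
  refine Metric.mem_closure_iff.2 fun ε hε => ?_
  obtain ⟨b, hb, hba⟩ := hP.exists_mem_span_norm_sub_le ha (half_pos hε)
  exact ⟨b, hb, by rw [dist_comm, dist_eq_norm]; linarith⟩

end IsSpectralFamily

end CStarAlgebra

namespace Submodule

variable {𝕜 E : Type*} [RCLike 𝕜] [NormedAddCommGroup E] [InnerProductSpace 𝕜 E]
  (K : Submodule 𝕜 E) [K.HasOrthogonalProjection] (T : E →L[𝕜] E)

theorem mul_starProjection_eq_zero_iff : T * K.starProjection = 0 ↔ K ≤ T.ker := by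
  refine ⟨fun h x hx => ?_,
    fun h => ContinuousLinearMap.ext fun x => h (K.starProjection_apply_mem x)⟩
  simpa [K.starProjection_eq_self_iff.2 hx] using congr($h x)

theorem starProjection_mul_eq_self_of_range_le (h : T.range ≤ K) : K.starProjection * T = T :=
  ContinuousLinearMap.ext fun x => K.starProjection_eq_self_iff.2 (h ⟨x, rfl⟩)

end Submodule

variable {H : Type*} [NormedAddCommGroup H] [InnerProductSpace ℂ H] [CompleteSpace H]

noncomputable def spectralProjection (a : H →L[ℂ] H) (t : ℝ) : H →L[ℂ] H :=
  (a - algebraMap ℝ (H →L[ℂ] H) t)⁺.ker.starProjection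

theorem isSpectralFamily_spectralProjection {a : H →L[ℂ] H} (ha : IsSelfAdjoint a) :
    IsSpectralFamily a (spectralProjection a) where
  isStarProjection _ := isStarProjection_starProjection
  monotone s t hst := by
    refine Submodule.starProjection_le_starProjection_iff.2 ?_
    rw [← Submodule.mul_starProjection_eq_zero_iff]
    exact mul_eq_zero_of_nonneg_of_le_of_mul_eq_zero (posPart_nonneg _)
      (antitone_posPart_sub_algebraMap ha hst)
      ((Submodule.mul_starProjection_eq_zero_iff _ _).2 le_rfl)
  posPart_mul _ := (Submodule.mul_starProjection_eq_zero_iff _ _).2 le_rfl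
  mul_negPart t := by
    refine Submodule.starProjection_mul_eq_self_of_range_le _ _ ?_
    rintro _ ⟨x, rfl⟩
    exact congr($(posPart_mul_negPart (a - algebraMap ℝ (H →L[ℂ] H) t)) x)

theorem selfAdjoint_mem_closure_span_projections_general
    (A : H →L[ℂ] H) (hA : IsSelfAdjoint A) :
    A ∈ closure (Submodule.span ℝ
      {P : H →L[ℂ] H | IsSelfAdjoint P ∧ IsIdempotentElem P} : Set (H →L[ℂ] H)) := by
  have hP := isSpectralFamily_spectralProjection hA
  refine closure_mono (Submodule.span_mono ?_) (hP.mem_closure_span hA)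
  rintro _ ⟨t, rfl⟩
  exact ⟨(hP.isStarProjection t).isSelfAdjoint, (hP.isStarProjection t).isIdempotentElem⟩

/-- If `dim H ≥ 2`, every bounded self-adjoint operator lies in the norm
closure of the real linear span of the orthogonal projections. -/
theorem selfAdjoint_mem_closure_span_projections
    (hdim : 2 ≤ Module.rank ℂ H)
    (A : H →L[ℂ] H) (hA : IsSelfAdjoint A) :
    A ∈ closure (Submodule.span ℝ
      {P : H →L[ℂ] H | IsSelfAdjoint P ∧ IsIdempotentElem P} : Set (H →L[ℂ] H)) :=
  selfAdjoint_mem_closure_span_projections_general A hA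
end

section
/- Let f : [0,1] → [0,1] be a strictly increasing bijection such that for all λ ∈ (0,1) both f(1−λ) ≤ 1 − f(λ) and f⁻¹(1−λ) ≤ 1 − f⁻¹(λ) hold. Then f(λ) + f(1−λ) = 1 for all λ ∈ [0,1]. -/
/-- If `f : [0,1] → [0,1]` is a strictly increasing bijection with inverse
`g` such that `f(1-λ) ≤ 1 - f(λ)` and `g(1-λ) ≤ 1 - g(λ)` for all `λ ∈ (0,1)`, then
`f(λ) + f(1-λ) = 1` for all `λ ∈ [0,1]`. -/
theorem symm_of_increasing_bijection (f g : ℝ → ℝ)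
    (hf : Set.BijOn f (Set.Icc (0:ℝ) 1) (Set.Icc (0:ℝ) 1))
    (hmono : StrictMonoOn f (Set.Icc (0:ℝ) 1))
    (hgf : ∀ x ∈ Set.Icc (0:ℝ) 1, g (f x) = x)
    (hfg : ∀ y ∈ Set.Icc (0:ℝ) 1, f (g y) = y)
    (h1 : ∀ l ∈ Set.Ioo (0:ℝ) 1, f (1 - l) ≤ 1 - f l)
    (h2 : ∀ l ∈ Set.Ioo (0:ℝ) 1, g (1 - l) ≤ 1 - g l) :
    ∀ l ∈ Set.Icc (0:ℝ) 1, f l + f (1 - l) = 1 := by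
  have h01 : (0:ℝ) ∈ Set.Icc (0:ℝ) 1 := by norm_num
  have h11 : (1:ℝ) ∈ Set.Icc (0:ℝ) 1 := by norm_num
  -- f 0 = 0
  have hf0 : f 0 = 0 := by
    obtain ⟨x, hx, hfx⟩ := hf.surjOn h01
    have hle : f 0 ≤ f x := hmono.monotoneOn h01 hx hx.1
    have : f 0 ∈ Set.Icc (0:ℝ) 1 := hf.mapsTo h01
    have := this.1
    linarith [hfx ▸ hle]
  have hf1 : f 1 = 1 := by
    obtain ⟨x, hx, hfx⟩ := hf.surjOn h11
    have hle : f x ≤ f 1 := hmono.monotoneOn hx h11 hx.2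
    have : f 1 ∈ Set.Icc (0:ℝ) 1 := hf.mapsTo h11
    have := this.2
    linarith [hfx ▸ hle]
  intro l hl
  rcases eq_or_lt_of_le hl.1 with h0 | h0
  · rw [← h0]; norm_num [hf0, hf1]
  rcases eq_or_lt_of_le hl.2 with h1' | h1'
  · rw [h1']; norm_num [hf0, hf1]
  -- l ∈ (0,1)
  have hlo : l ∈ Set.Ioo (0:ℝ) 1 := ⟨h0, h1'⟩
  have hflm : f l ∈ Set.Icc (0:ℝ) 1 := hf.mapsTo hl
  have hfl0 : 0 < f l := by
    have := hmono h01 hl h0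
    linarith [hf0]
  have hfl1 : f l < 1 := by
    have := hmono hl h11 h1'
    linarith [hf1]
  have hli : (1 - f l) ∈ Set.Icc (0:ℝ) 1 := by constructor <;> linarith
  have key := h2 (f l) ⟨hfl0, hfl1⟩
  rw [hgf l hl] at key
  have hgmem : g (1 - f l) ∈ Set.Icc (0:ℝ) 1 := by
    obtain ⟨x, hx, hfx⟩ := hf.surjOn hli
    have : g (1 - f l) = x := by rw [← hfx, hgf x hx]
    rw [this]; exact hx
  have h1l : (1 - l) ∈ Set.Icc (0:ℝ) 1 := by
    constructor <;> [linarith [hlo.2]; linarith [hlo.1]]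
  have hge : 1 - f l ≤ f (1 - l) := by
    have := hmono.monotoneOn hgmem h1l key
    rw [hfg _ hli] at this
    exact this
  have hle := h1 l hlo
  linarith
end
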